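/- Variance bound for the variance-reduced stochastic gradient: with i sampled with probability pᵢ, v = (∇f_i(w) − ∇f_i(w̃))/(n pᵢ) + ∇f(w̃), one has E[v] = ∇f(w) and E‖v − ∇f(w)‖² ≤ 4 L_P (f(w) − f* + f(w̃) − f*), where w, w̃ ∈ W and f* = min_{u∈W} f(u). -/

import Mathlib

/-! Unbiasedness is the identity `∑ pᵢ • (n pᵢ)⁻¹ • yᵢ = n⁻¹ • ∑ yᵢ`. For the variance, subtracting
the mean only lowers the second moment; splitting `∇fᵢ(w) - ∇fᵢ(w̃)` through `∇fᵢ(w*)`, each half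
is controlled by the co-coercivity of a convex `L`-smooth function,
`‖∇g x - ∇g y‖² ≤ 2L (g x - g y - ⟪∇g y, x - y⟫)`. Averaging with the weights
`(n pᵢ)⁻¹ ≤ L_P / Lᵢ` gives `2 L_P (f u - f* - ⟪∇f w*, u - w*⟫)`, and the first-order optimality
condition at `w*` drops the inner product. -/

open RealInnerProductSpace Set Finset
open scoped Gradient

section InnerProductSpace

variable {E : Type*} [NormedAddCommGroup E] [InnerProductSpace ℝ E]

theorem norm_sub_sq_le_two_mul (a b : E) : ‖a - b‖ ^ 2 ≤ 2 * (‖a‖ ^ 2 + ‖b‖ ^ 2) := by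
  rw [← parallelogram_law_with_norm ℝ a b]
  exact le_add_of_nonneg_left (sq_nonneg _)

theorem sum_mul_norm_sub_sq_eq {ι : Type*} (s : Finset ι) {p : ι → ℝ} {X : ι → E} {m : E}
    (hp : ∑ i ∈ s, p i = 1) (hm : ∑ i ∈ s, p i • X i = m) :
    ∑ i ∈ s, p i * ‖X i - m‖ ^ 2 = ∑ i ∈ s, p i * ‖X i‖ ^ 2 - ‖m‖ ^ 2 := by
  have hcross : ∑ i ∈ s, p i * ⟪X i, m⟫ = ‖m‖ ^ 2 := by
    simp_rw [← real_inner_smul_left, ← sum_inner, hm, real_inner_self_eq_norm_sq]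
  simp_rw [norm_sub_sq_real, mul_add, mul_sub, sum_add_distrib, sum_sub_distrib, ← sum_mul, hp,
    mul_left_comm _ (2 : ℝ), ← mul_sum, hcross]
  ring

theorem sum_mul_norm_sub_sq_le {ι : Type*} (s : Finset ι) {p : ι → ℝ} {X : ι → E} {m : E}
    (hp : ∑ i ∈ s, p i = 1) (hm : ∑ i ∈ s, p i • X i = m) :
    ∑ i ∈ s, p i * ‖X i - m‖ ^ 2 ≤ ∑ i ∈ s, p i * ‖X i‖ ^ 2 := by
  rw [sum_mul_norm_sub_sq_eq s hp hm]
  exact sub_le_self _ (sq_nonneg _)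

end InnerProductSpace

theorem sum_smul_inv_mul_smul {ι M : Type*} [AddCommMonoid M] [Module ℝ M] (s : Finset ι)
    (c : ℝ) {p : ι → ℝ} (hp : ∀ i ∈ s, p i ≠ 0) (y : ι → M) :
    ∑ i ∈ s, p i • (c * p i)⁻¹ • y i = c⁻¹ • ∑ i ∈ s, y i := by
  rw [smul_sum]
  refine sum_congr rfl fun i hi => ?_
  rw [smul_smul, mul_inv, mul_left_comm, mul_inv_cancel₀ (hp i hi), mul_one]

theorem mul_norm_inv_mul_smul_sq {F : Type*} [SeminormedAddCommGroup F] [NormedSpace ℝ F]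
    {c p : ℝ} (hp : p ≠ 0) (y : F) :
    p * ‖(c * p)⁻¹ • y‖ ^ 2 = c⁻¹ * ((c * p)⁻¹ * ‖y‖ ^ 2) := by
  rw [norm_smul, mul_pow, Real.norm_eq_abs, sq_abs, mul_inv]
  field_simp

theorem mul_norm_inv_mul_smul_sub_sq_le {F : Type*} [NormedAddCommGroup F]
    [InnerProductSpace ℝ F] {c p : ℝ} (hc : 0 ≤ c) (hp : 0 < p) (a b z : F) :
    p * ‖(c * p)⁻¹ • (a - b)‖ ^ 2
      ≤ 2 * (c⁻¹ * ((c * p)⁻¹ * ‖a - z‖ ^ 2)) + 2 * (c⁻¹ * ((c * p)⁻¹ * ‖b - z‖ ^ 2)) := by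
  have hcp : 0 ≤ c⁻¹ * (c * p)⁻¹ := by positivity
  rw [mul_norm_inv_mul_smul_sq hp.ne', ← sub_sub_sub_cancel_right a b z]
  nlinarith [norm_sub_sq_le_two_mul (a - z) (b - z)]

theorem nonneg_of_norm_sub_le_mul {E F : Type*} [NormedAddCommGroup E] [Nontrivial E]
    [SeminormedAddCommGroup F] {G : E → F} {L : ℝ} (h : ∀ a b, ‖G a - G b‖ ≤ L * ‖a - b‖) :
    0 ≤ L := by
  obtain ⟨a, b, hab⟩ := exists_pair_ne E
  have hpos : 0 < ‖a - b‖ := norm_pos_iff.2 (sub_ne_zero.2 hab)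
  exact nonneg_of_mul_nonneg_left ((norm_nonneg _).trans (h a b)) hpos

section Gradient

variable {E : Type*} [NormedAddCommGroup E] [InnerProductSpace ℝ E] [CompleteSpace E]
  {g : E → ℝ} {L : ℝ}

theorem HasGradientAt.hasDerivAt_comp_add_smul {g' x v : E} {t : ℝ}
    (h : HasGradientAt g g' (x + t • v)) :
    HasDerivAt (fun s : ℝ => g (x + s • v)) ⟪g', v⟫ t := by
  have hline : HasDerivAt (fun s : ℝ => x + s • v) v t := by
    simpa using ((hasDerivAt_id t).smul_const v).const_add x
  exact h.hasFDerivAt.comp_hasDerivAt t hline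

theorem hasGradientAt_const_mul_sum {ι : Type*} (s : Finset ι) {g : ι → E → ℝ} (c : ℝ) {x : E}
    (hg : ∀ i ∈ s, DifferentiableAt ℝ (g i) x) :
    HasGradientAt (fun u => c * ∑ i ∈ s, g i u) (c • ∑ i ∈ s, ∇ (g i) x) x := by
  rw [hasGradientAt_iff_hasFDerivAt, map_smul, map_sum]
  simp only [toDual_gradient]
  exact (HasFDerivAt.fun_sum fun i hi => (hg i hi).hasFDerivAt).const_mul c

theorem ConvexOn.add_inner_gradient_le (hg : ConvexOn ℝ univ g) {x : E}
    (hx : DifferentiableAt ℝ g x) (y : E) : g x + ⟪∇ g x, y - x⟫ ≤ g y := by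
  have hline : ConvexOn ℝ univ (fun t : ℝ => g (x + t • (y - x))) := by
    simpa [Function.comp_def, AffineMap.lineMap_apply, add_comm] using
      hg.comp_affineMap (AffineMap.lineMap x y)
  have hderiv := (by simpa using hx.hasGradientAt :
    HasGradientAt g (∇ g x) (x + (0 : ℝ) • (y - x))).hasDerivAt_comp_add_smul
  have hslope := hline.le_slope_of_hasDerivAt (mem_univ 0) (mem_univ 1) zero_lt_one hderiv
  simp only [slope_def_field, zero_smul, add_zero, one_smul, add_sub_cancel, sub_zero,
    div_one] at hslope
  linarith

theorem le_add_inner_gradient_add_sq (hg : Differentiable ℝ g)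
    (hlip : ∀ a b, ‖∇ g a - ∇ g b‖ ≤ L * ‖a - b‖) (x y : E) :
    g y ≤ g x + ⟪∇ g x, y - x⟫ + L / 2 * ‖y - x‖ ^ 2 := by
  set v := y - x
  set ψ : ℝ → ℝ := fun t => g (x + t • v) - t * ⟪∇ g x, v⟫ - L / 2 * t ^ 2 * ‖v‖ ^ 2
  have hψ : ∀ t, HasDerivAt ψ (⟪∇ g (x + t • v), v⟫ - ⟪∇ g x, v⟫ - L * t * ‖v‖ ^ 2) t := by
    intro t
    have h1 := (hg (x + t • v)).hasGradientAt.hasDerivAt_comp_add_smul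
    have h2 : HasDerivAt (fun s : ℝ => s * ⟪∇ g x, v⟫) ⟪∇ g x, v⟫ t := by
      simpa using (hasDerivAt_id t).mul_const ⟪∇ g x, v⟫
    have h3 : HasDerivAt (fun s : ℝ => L / 2 * s ^ 2 * ‖v‖ ^ 2) (L * t * ‖v‖ ^ 2) t :=
      (((hasDerivAt_pow 2 t).const_mul (L / 2)).mul_const (‖v‖ ^ 2)).congr_deriv
        (by push_cast; ring)
    exact (h1.sub h2).sub h3
  have hanti : AntitoneOn ψ (Ici 0) := by
    refine antitoneOn_of_hasDerivWithinAt_nonpos (convex_Ici 0)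
      (HasDerivAt.continuousOn fun t _ => hψ t) (fun t _ => (hψ t).hasDerivWithinAt) ?_
    intro t ht
    rw [interior_Ici, Set.mem_Ioi] at ht
    have hnorm : ‖∇ g (x + t • v) - ∇ g x‖ ≤ L * (t * ‖v‖) := by
      simpa [norm_smul, abs_of_pos ht] using hlip (x + t • v) x
    nlinarith [real_inner_le_norm (∇ g (x + t • v) - ∇ g x) v,
      inner_sub_left (𝕜 := ℝ) (∇ g (x + t • v)) (∇ g x) v, norm_nonneg v]
  have := hanti self_mem_Ici (mem_Ici.2 zero_le_one) zero_le_one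
  simp only [ψ, zero_smul, add_zero, zero_mul, sub_zero, one_smul, one_mul, v,
    add_sub_cancel] at this
  linarith

theorem ConvexOn.norm_gradient_sub_sq_le (hconv : ConvexOn ℝ univ g) (hg : Differentiable ℝ g)
    (hL : 0 ≤ L) (hlip : ∀ a b, ‖∇ g a - ∇ g b‖ ≤ L * ‖a - b‖) (x y : E) :
    ‖∇ g x - ∇ g y‖ ^ 2 ≤ 2 * L * (g x - g y - ⟪∇ g y, x - y⟫) := by
  set δ := ∇ g x - ∇ g y
  rcases hL.eq_or_lt with rfl | hL
  · simpa [δ, sub_eq_zero] using hlip x y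
  -- Compare the tangent plane at `y` with the quadratic upper bound at `x`, both evaluated at the
  -- gradient step `z = x - δ / L`.
  set z := x - L⁻¹ • δ
  have hlower := hconv.add_inner_gradient_le (hg y) z
  have hupper := le_add_inner_gradient_add_sq hg hlip x z
  have hzy : z - y = (x - y) - L⁻¹ • δ := by simp only [z]; abel
  have hzx : z - x = -(L⁻¹ • δ) := by simp only [z]; abel
  rw [hzy, inner_sub_right, real_inner_smul_right] at hlower
  rw [hzx, inner_neg_right, real_inner_smul_right, norm_neg, norm_smul, Real.norm_eq_abs,
    abs_of_pos (inv_pos.2 hL)] at hupper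
  have hδ : ⟪∇ g x, δ⟫ - ⟪∇ g y, δ⟫ = ‖δ‖ ^ 2 := by
    rw [← inner_sub_left, real_inner_self_eq_norm_sq]
  have key : L⁻¹ / 2 * ‖δ‖ ^ 2 ≤ g x - g y - ⟪∇ g y, x - y⟫ := by
    have hsq : L / 2 * (L⁻¹ * ‖δ‖) ^ 2 = L⁻¹ / 2 * ‖δ‖ ^ 2 := by field_simp
    have hcross : L⁻¹ * ⟪∇ g x, δ⟫ - L⁻¹ * ⟪∇ g y, δ⟫ = L⁻¹ * ‖δ‖ ^ 2 := by rw [← mul_sub, hδ]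
    linarith
  calc ‖δ‖ ^ 2 = 2 * L * (L⁻¹ / 2 * ‖δ‖ ^ 2) := by field_simp
    _ ≤ _ := by gcongr

theorem IsMinOn.inner_gradient_nonneg {W : Set E} {a u : E} (hmin : IsMinOn g W a)
    (hW : Convex ℝ W) (ha : a ∈ W) (hu : u ∈ W) (hg : DifferentiableAt ℝ g a) :
    0 ≤ ⟪∇ g a, u - a⟫ := by
  rw [inner_gradient_left]
  exact hmin.localize.hasFDerivWithinAt_nonneg hg.hasFDerivAt.hasFDerivWithinAt
    (sub_mem_posTangentConeAt_of_segment_subset (hW.segment_subset ha hu))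

section FiniteSum

variable {n : ℕ} {fi : Fin n → E → ℝ} {f : E → ℝ}

theorem hasGradientAt_of_eq_average (hdiff : ∀ i, Differentiable ℝ (fi i))
    (hf : ∀ u, f u = (1 / (n : ℝ)) * ∑ i, fi i u) (u : E) :
    HasGradientAt f ((n : ℝ)⁻¹ • ∑ i, ∇ (fi i) u) u := by
  rw [funext hf, ← one_div]
  exact hasGradientAt_const_mul_sum univ _ fun i _ => hdiff i u

theorem inv_mul_sum_inv_mul_norm_gradient_sub_sq_le {Li p : Fin n → ℝ} {LP : ℝ}
    (hconv : ∀ i, ConvexOn ℝ univ (fi i)) (hdiff : ∀ i, Differentiable ℝ (fi i))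
    (hlip : ∀ i, ∀ x y, ‖∇ (fi i) x - ∇ (fi i) y‖ ≤ Li i * ‖x - y‖)
    (hf : ∀ u, f u = (1 / (n : ℝ)) * ∑ i, fi i u) (hp : ∀ i, 0 < p i)
    (hLP : IsGreatest {x : ℝ | ∃ i, x = Li i / ((n : ℝ) * p i)} LP)
    {a u : E} (hopt : 0 ≤ ⟪∇ f a, u - a⟫) :
    (n : ℝ)⁻¹ * ∑ i, ((n : ℝ) * p i)⁻¹ * ‖∇ (fi i) u - ∇ (fi i) a‖ ^ 2
      ≤ 2 * LP * (f u - f a) := by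
  rcases subsingleton_or_nontrivial E with hE | hE
  · simp [Subsingleton.elim u a]
  have hLi : ∀ i, 0 ≤ Li i := fun i => nonneg_of_norm_sub_le_mul (hlip i)
  have hLP0 : 0 ≤ LP := by
    obtain ⟨i, rfl⟩ := hLP.1
    exact div_nonneg (hLi i) (mul_nonneg n.cast_nonneg (hp i).le)
  set B : Fin n → ℝ := fun i => fi i u - fi i a - ⟪∇ (fi i) a, u - a⟫
  have hB : f u - f a - ⟪∇ f a, u - a⟫ = (n : ℝ)⁻¹ * ∑ i, B i := by
    rw [hf, hf, (hasGradientAt_of_eq_average hdiff hf a).gradient, real_inner_smul_left,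
      sum_inner, sum_sub_distrib, sum_sub_distrib]
    ring
  have hterm : ∀ i, ((n : ℝ) * p i)⁻¹ * ‖∇ (fi i) u - ∇ (fi i) a‖ ^ 2 ≤ 2 * LP * B i := by
    intro i
    have hBi : 0 ≤ B i := by linarith [(hconv i).add_inner_gradient_le (hdiff i a) u]
    have hLPi : Li i * ((n : ℝ) * p i)⁻¹ ≤ LP := hLP.2 ⟨i, div_eq_mul_inv _ _⟩
    have hnp : 0 ≤ ((n : ℝ) * p i)⁻¹ := inv_nonneg.2 (mul_nonneg n.cast_nonneg (hp i).le)
    calc ((n : ℝ) * p i)⁻¹ * ‖∇ (fi i) u - ∇ (fi i) a‖ ^ 2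
        ≤ ((n : ℝ) * p i)⁻¹ * (2 * Li i * B i) := mul_le_mul_of_nonneg_left
          ((hconv i).norm_gradient_sub_sq_le (hdiff i) (hLi i) (hlip i) u a) hnp
      _ = 2 * (Li i * ((n : ℝ) * p i)⁻¹) * B i := by ring
      _ ≤ 2 * LP * B i := by gcongr
  calc (n : ℝ)⁻¹ * ∑ i, ((n : ℝ) * p i)⁻¹ * ‖∇ (fi i) u - ∇ (fi i) a‖ ^ 2
      ≤ (n : ℝ)⁻¹ * ∑ i, 2 * LP * B i :=
        mul_le_mul_of_nonneg_left (sum_le_sum fun i _ => hterm i) (inv_nonneg.2 n.cast_nonneg)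
    _ = 2 * LP * (f u - f a - ⟪∇ f a, u - a⟫) := by rw [hB, ← mul_sum]; ring
    _ ≤ 2 * LP * (f u - f a) := mul_le_mul_of_nonneg_left (by linarith) (by positivity)

end FiniteSum

end Gradient

theorem stmt_18_general (d n : ℕ)
    (fi : Fin n → EuclideanSpace ℝ (Fin d) → ℝ) (Li p : Fin n → ℝ)
    (hconv : ∀ i, ConvexOn ℝ Set.univ (fi i)) (hdiff : ∀ i, Differentiable ℝ (fi i))
    (hlip : ∀ i, ∀ x y, ‖gradient (fi i) x - gradient (fi i) y‖ ≤ Li i * ‖x - y‖)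
    (f : EuclideanSpace ℝ (Fin d) → ℝ)
    (hf : ∀ u, f u = (1 / (n : ℝ)) * ∑ i, fi i u)
    (W : Set (EuclideanSpace ℝ (Fin d))) (hW : Convex ℝ W)
    (wstar : EuclideanSpace ℝ (Fin d)) (hws : wstar ∈ W)
    (hmin : ∀ u ∈ W, f wstar ≤ f u)
    (hp : ∀ i, p i ∈ Set.Ioo (0 : ℝ) 1) (hsum : ∑ i, p i = 1)
    (LP : ℝ) (hLP : IsGreatest {x : ℝ | ∃ i, x = Li i / ((n : ℝ) * p i)} LP)
    (w wt : EuclideanSpace ℝ (Fin d)) (hw : w ∈ W) (hwt : wt ∈ W)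
    (v : Fin n → EuclideanSpace ℝ (Fin d))
    (hv : ∀ i, v i = (((n : ℝ) * p i)⁻¹) • (gradient (fi i) w - gradient (fi i) wt)
      + gradient f wt) :
    (∑ i, p i • v i = gradient f w) ∧
    ∑ i, p i * ‖v i - gradient f w‖ ^ 2
      ≤ 4 * LP * ((f w - f wstar) + (f wt - f wstar)) := by
  have hp0 : ∀ i, 0 < p i := fun i => (hp i).1
  have hgrad := hasGradientAt_of_eq_average hdiff hf
  have hsmooth : ∀ u ∈ W, (n : ℝ)⁻¹ * ∑ i, ((n : ℝ) * p i)⁻¹ * ‖∇ (fi i) u - ∇ (fi i) wstar‖ ^ 2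
      ≤ 2 * LP * (f u - f wstar) := fun u hu =>
    inv_mul_sum_inv_mul_norm_gradient_sub_sq_le hconv hdiff hlip hf hp0 hLP
      ((isMinOn_iff.2 hmin).inner_gradient_nonneg hW hws hu (hgrad wstar).differentiableAt)
  set X := fun i => ((n : ℝ) * p i)⁻¹ • (∇ (fi i) w - ∇ (fi i) wt)
  have hvX : ∀ i, v i = X i + ∇ f wt := hv
  have hmean : ∑ i, p i • X i = ∇ f w - ∇ f wt := by
    rw [sum_smul_inv_mul_smul _ _ (fun i _ => (hp0 i).ne'), sum_sub_distrib, smul_sub,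
      (hgrad w).gradient, (hgrad wt).gradient]
  refine ⟨?_, ?_⟩
  · simp_rw [hvX, smul_add, sum_add_distrib, hmean, ← sum_smul, hsum, one_smul, sub_add_cancel]
  calc ∑ i, p i * ‖v i - ∇ f w‖ ^ 2 = ∑ i, p i * ‖X i - (∇ f w - ∇ f wt)‖ ^ 2 := by
        simp_rw [hvX, sub_sub_eq_add_sub]
    _ ≤ ∑ i, p i * ‖X i‖ ^ 2 := sum_mul_norm_sub_sq_le _ hsum hmean
    _ ≤ 2 * ((n : ℝ)⁻¹ * ∑ i, ((n : ℝ) * p i)⁻¹ * ‖∇ (fi i) w - ∇ (fi i) wstar‖ ^ 2)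
        + 2 * ((n : ℝ)⁻¹ * ∑ i, ((n : ℝ) * p i)⁻¹ * ‖∇ (fi i) wt - ∇ (fi i) wstar‖ ^ 2) := by
        simp only [mul_sum, ← sum_add_distrib]
        exact sum_le_sum fun i _ =>
          mul_norm_inv_mul_smul_sub_sq_le n.cast_nonneg (hp0 i) _ _ (∇ (fi i) wstar)
    _ ≤ 2 * (2 * LP * (f w - f wstar)) + 2 * (2 * LP * (f wt - f wstar)) := by
        gcongr 2 * ?_ + 2 * ?_
        exacts [hsmooth w hw, hsmooth wt hwt]
    _ = 4 * LP * ((f w - f wstar) + (f wt - f wstar)) := by ring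

/-- Variance bound for the variance-reduced stochastic gradient: with index `i`
sampled with probability `pᵢ` and `vᵢ = (∇fᵢ(w) − ∇fᵢ(w̃))/(n pᵢ) + ∇f(w̃)`, one has
`E[v] = ∇f(w)` and `E‖v − ∇f(w)‖² ≤ 4 L_P (f(w) − f* + f(w̃) − f*)`. -/
theorem stmt_18 (d n : ℕ) (hn : 0 < n)
    (fi : Fin n → EuclideanSpace ℝ (Fin d) → ℝ) (Li p : Fin n → ℝ)
    (hconv : ∀ i, ConvexOn ℝ Set.univ (fi i)) (hdiff : ∀ i, Differentiable ℝ (fi i))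
    (hlip : ∀ i, ∀ x y, ‖gradient (fi i) x - gradient (fi i) y‖ ≤ Li i * ‖x - y‖)
    (f : EuclideanSpace ℝ (Fin d) → ℝ)
    (hf : ∀ u, f u = (1 / (n : ℝ)) * ∑ i, fi i u)
    (W : Set (EuclideanSpace ℝ (Fin d))) (hW : Convex ℝ W)
    (wstar : EuclideanSpace ℝ (Fin d)) (hws : wstar ∈ W)
    (hmin : ∀ u ∈ W, f wstar ≤ f u)
    (hp : ∀ i, p i ∈ Set.Ioo (0 : ℝ) 1) (hsum : ∑ i, p i = 1)
    (LP : ℝ) (hLP : IsGreatest {x : ℝ | ∃ i, x = Li i / ((n : ℝ) * p i)} LP)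
    (w wt : EuclideanSpace ℝ (Fin d)) (hw : w ∈ W) (hwt : wt ∈ W)
    (v : Fin n → EuclideanSpace ℝ (Fin d))
    (hv : ∀ i, v i = (((n : ℝ) * p i)⁻¹) • (gradient (fi i) w - gradient (fi i) wt)
      + gradient f wt) :
    (∑ i, p i • v i = gradient f w) ∧
    ∑ i, p i * ‖v i - gradient f w‖ ^ 2
      ≤ 4 * LP * ((f w - f wstar) + (f wt - f wstar)) :=
  stmt_18_general d n fi Li p hconv hdiff hlip f hf W hW wstar hws hmin hp hsum LP hLP w wt hw hwt v
    hv
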